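/- Let n ≥ 2 and β = (β_1, …, β_{n−1}) ∈ {0,1}^{n−1}. Define the 2n-qubit vector v(β) on registers A_1, …, A_n, B_1, …, B_n as follows: place |GHZ_{n+1}⟩ on registers A_1, B_1, …, B_n, place |β_i⟩ on register A_{i+1} for i = 1, …, n−1, then apply CNOT_n to registers A_1 … A_n and X^{β_i} to register B_{i+1} for each i. Then v(β) = 2^{−(n−1)/2} Σ_{z ∈ {0,1}^{n−1}} (−1)^{β·z} |Φ^{z',0}⟩_{A_1 B_1} ⊗ ⊗_{i=1}^{n−1} |Φ^{z_i,0}⟩_{A_{i+1} B_{i+1}}, where z' = z_1 ⊕ z_2 ⊕ … ⊕ z_{n−1} and β·z = Σ_i β_i z_i. -/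

import Mathlib

/-!
The circuit acts by permutation matrices, so `v(β)` is, up to the factor `1/√2`, the indicator
of `a = b` together with `a_{i+1} = β_i ⊕ a_1`. Since `|Φ^{z,0}⟩ = (Z^z ⊗ I)|Φ⟩`, each term of
the Bell expansion splits into the character `z ↦ (-1)^{z·c}` of `(ℤ/2)^{n-1}`, with
`c_i = β_i ⊕ a_1 ⊕ a_{i+1}`, times the `z`-independent amplitude of `|Φ⟩^{⊗ n}`. Summing over `z`,
orthogonality of characters keeps only `c = 0`, which is the same indicator.
-/

open Matrix

/-- Basis labels for registers `A_1, …, A_n, B_1, …, B_n` (`n = n' + 2`):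
a pair `(a, b)` of bitstrings for the `A` and `B` registers. -/
abbrev PairBasis (n : ℕ) : Type := (Fin n → Fin 2) × (Fin n → Fin 2)

/-- Amplitude of the GHZ state `|GHZ_{n+1}⟩` on registers `A_1, B_1, …, B_n`. -/
noncomputable def ghzA1B (n : ℕ) : Fin 2 × (Fin (n + 2) → Fin 2) → ℂ := fun u =>
  ((if u.1 = 0 ∧ u.2 = fun _ => 0 then 1 else 0) +
      (if u.1 = 1 ∧ u.2 = fun _ => 1 then 1 else 0)) / (Real.sqrt 2 : ℂ)

/-- Amplitude of the Bell basis state `|Φ^{z,x}⟩ = (Z^z X^x ⊗ I)|Φ⟩` at `(u, v)`: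
nonzero iff `u = v + x`, with phase `(-1)^{z·u}` and magnitude `1/√2`. -/
noncomputable def bellBasisAmp (z x : Fin 2) (u v : Fin 2) : ℂ :=
  if u = v + x then (-1) ^ (z.val * u.val) * ((Real.sqrt 2 : ℂ))⁻¹ else 0

/-- `CNOT_n ⊗ I_B`: `|0⟩⟨0| ⊗ I^{⊗(n-1)} + |1⟩⟨1| ⊗ X^{⊗(n-1)}` on the `A`
registers (control `A_1`), identity on the `B` registers. -/
noncomputable def cnotA (n : ℕ) : Matrix (PairBasis (n + 2)) (PairBasis (n + 2)) ℂ :=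
  Matrix.of fun p q =>
    if p.2 = q.2 ∧ p.1 0 = q.1 0 ∧ (∀ i, i ≠ 0 → p.1 i = q.1 i + q.1 0)
    then (1 : ℂ) else 0

/-- The correction operator `⊗_{i=1}^{n-1} X^{β_i}_{B_{i+1}}` (identity on `B_1`
and on all `A` registers). -/
noncomputable def xCorrB (n : ℕ) (β : Fin (n + 1) → Fin 2) :
    Matrix (PairBasis (n + 2)) (PairBasis (n + 2)) ℂ :=
  Matrix.of fun p q =>
    if p.1 = q.1 ∧ (∀ j, p.2 j = q.2 j + (Fin.cons 0 β : Fin (n + 2) → Fin 2) j)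
    then (1 : ℂ) else 0

/-- The state `|GHZ_{n+1}⟩_{A_1 B_1 ⋯ B_n} ⊗ (⊗_i |β_i⟩_{A_{i+1}})`. -/
noncomputable def initState (n : ℕ) (β : Fin (n + 1) → Fin 2) : PairBasis (n + 2) → ℂ :=
  fun p => ghzA1B n (p.1 0, p.2) * ∏ i : Fin (n + 1), (if p.1 i.succ = β i then (1 : ℂ) else 0)

/-- The vector `v(β)`: apply `CNOT_n` on the `A` registers and `X^{β_i}` on
`B_{i+1}` to the state `initState n β`. -/
noncomputable def vBeta (n : ℕ) (β : Fin (n + 1) → Fin 2) : PairBasis (n + 2) → ℂ :=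
  (xCorrB n β * cnotA n).mulVec (initState n β)

section Signs

variable {R : Type*}

lemma neg_one_pow_mul_val_add [Monoid R] [HasDistribNeg R] (k : ℕ) (x y : Fin 2) :
    (-1 : R) ^ (k * (x + y).val) = (-1) ^ (k * x.val) * (-1) ^ (k * y.val) := by
  fin_cases x <;> fin_cases y <;> simp [← pow_add, ← mul_two, pow_mul']

lemma neg_one_pow_mul_val_sum [CommMonoid R] [HasDistribNeg R] {ι : Type*} (k : ℕ)
    (s : Finset ι) (z : ι → Fin 2) :
    (-1 : R) ^ (k * (∑ i ∈ s, z i).val) = ∏ i ∈ s, (-1) ^ (k * (z i).val) := by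
  classical
  induction s using Finset.induction with
  | empty => simp
  | insert i s hi ih => rw [Finset.sum_insert hi, Finset.prod_insert hi, neg_one_pow_mul_val_add, ih]

lemma sum_neg_one_pow_val_mul_val [Ring R] (c : Fin 2) :
    ∑ x : Fin 2, (-1 : R) ^ (x.val * c.val) = if c = 0 then 2 else 0 := by
  fin_cases c <;> simp [Fin.sum_univ_two]

lemma sum_neg_one_pow_dotProduct [CommRing R] {ι : Type*} [Fintype ι] [DecidableEq ι]
    (c : ι → Fin 2) :
    ∑ z : ι → Fin 2, (-1 : R) ^ (∑ i, (z i).val * (c i).val)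
      = if c = 0 then 2 ^ Fintype.card ι else 0 := by
  simp only [← Finset.prod_pow_eq_pow_sum]
  rw [← Fintype.prod_sum fun i (x : Fin 2) => (-1 : R) ^ (x.val * (c i).val)]
  simp only [sum_neg_one_pow_val_mul_val, Fintype.prod_ite_zero, Finset.prod_const,
    Finset.card_univ, funext_iff, Pi.zero_apply]

end Signs

lemma inv_sqrt_two_sq_mul_two : ((Real.sqrt 2 : ℂ))⁻¹ ^ 2 * 2 = 1 := by
  rw [inv_pow, ← Complex.ofReal_pow, Real.sq_sqrt zero_le_two]
  norm_num

lemma mulVec_apply_of_row_eq_ite {ι R : Type*} [Fintype ι] [DecidableEq ι] [NonAssocSemiring R]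
    {M : Matrix ι ι R} {p p' : ι} (hM : ∀ q, M p q = if q = p' then 1 else 0) (v : ι → R) :
    (M *ᵥ v) p = v p' := by
  simp [mulVec, dotProduct, hM]

lemma xCorrB_apply (n : ℕ) (β : Fin (n + 1) → Fin 2) (a b : Fin (n + 2) → Fin 2)
    (q : PairBasis (n + 2)) :
    xCorrB n β (a, b) q = if q = (a, b + Fin.cons 0 β) then 1 else 0 := by
  obtain ⟨a', b'⟩ := q
  simp only [xCorrB, of_apply, Prod.mk.injEq, funext_iff, Pi.add_apply]
  open Fin.CommRing in
  exact if_congr (and_congr (forall_congr' fun _ => eq_comm)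
    (forall_congr' fun _ => CharTwo.eq_add_iff_add_eq.trans eq_comm)) rfl rfl

lemma cnotA_apply (n : ℕ) (a b : Fin (n + 2) → Fin 2) (q : PairBasis (n + 2)) :
    cnotA n (a, b) q = if q = (Fin.cons (a 0) fun i => a i.succ + a 0, b) then 1 else 0 := by
  obtain ⟨a', b'⟩ := q
  simp only [cnotA, of_apply, Prod.mk.injEq, funext_iff]
  refine if_congr ⟨?_, ?_⟩ rfl rfl
  · rintro ⟨hb, h0, ha⟩
    refine ⟨fun j => Fin.cases h0.symm (fun i => ?_) j, fun j => (hb j).symm⟩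
    open Fin.CommRing in
    rw [Fin.cons_succ, ha i.succ i.succ_ne_zero, h0, CharTwo.add_cancel_right]
  · rintro ⟨ha, hb⟩
    refine ⟨fun j => (hb j).symm, by simp [ha 0], fun i hi => ?_⟩
    obtain ⟨i, rfl⟩ := Fin.exists_succ_eq.mpr hi
    open Fin.CommRing in
    rw [ha, ha, Fin.cons_succ, Fin.cons_zero, CharTwo.add_cancel_right]

lemma ghzA1B_apply (n : ℕ) (u : Fin 2 × (Fin (n + 2) → Fin 2)) :
    ghzA1B n u = if u.2 = fun _ => u.1 then ((Real.sqrt 2 : ℂ))⁻¹ else 0 := by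
  obtain ⟨x, w⟩ := u
  fin_cases x <;> simp [ghzA1B, div_eq_mul_inv]

lemma vBeta_apply (n : ℕ) (β : Fin (n + 1) → Fin 2) (a b : Fin (n + 2) → Fin 2) :
    vBeta n β (a, b) = if a = b ∧ ∀ i, a i.succ = β i + a 0 then ((Real.sqrt 2 : ℂ))⁻¹ else 0 := by
  rw [vBeta, ← mulVec_mulVec, mulVec_apply_of_row_eq_ite (xCorrB_apply n β a b),
    mulVec_apply_of_row_eq_ite (cnotA_apply n a _), initState, ghzA1B_apply]
  simp only [Fin.cons_zero, Fin.cons_succ, Fintype.prod_boole, mul_ite, mul_one, mul_zero, ← ite_and]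
  refine if_congr ?_ rfl rfl
  simp only [funext_iff, Pi.add_apply]
  open Fin.CommRing in
  simp only [CharTwo.add_eq_iff_eq_add]
  constructor
  · rintro ⟨ha, hb⟩
    refine ⟨fun j => Fin.cases ?_ (fun i => ?_) j, ha⟩
    · simpa using (hb 0).symm
    · simpa [ha, add_comm] using (hb i.succ).symm
  · rintro ⟨hab, ha⟩
    refine ⟨ha, fun j => Fin.cases ?_ (fun i => ?_) j⟩
    · simp [hab]
    · simp [← hab, ha, add_comm]

lemma bellBasisAmp_zero_right (z u v : Fin 2) :
    bellBasisAmp z 0 u v = (-1) ^ (z.val * u.val) * bellBasisAmp 0 0 u v := by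
  simp only [bellBasisAmp]
  split_ifs <;> simp

lemma prod_bellBasisAmp_zero_zero {m : ℕ} (a b : Fin m → Fin 2) :
    ∏ j, bellBasisAmp 0 0 (a j) (b j) = if a = b then ((Real.sqrt 2 : ℂ))⁻¹ ^ m else 0 := by
  simp [bellBasisAmp, Fintype.prod_ite_zero, funext_iff]

lemma bell_term_eq_neg_one_pow_mul_prod (n : ℕ) (β z : Fin (n + 1) → Fin 2) (a b : Fin (n + 2) → Fin 2) :
    (-1 : ℂ) ^ (∑ i, (β i).val * (z i).val) *
        (bellBasisAmp (∑ i, z i) 0 (a 0) (b 0) *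
          ∏ i : Fin (n + 1), bellBasisAmp (z i) 0 (a i.succ) (b i.succ))
      = (-1) ^ (∑ i, (z i).val * (β i + a 0 + a i.succ).val) *
          ∏ j, bellBasisAmp 0 0 (a j) (b j) := by
  rw [Fin.prod_univ_succ (fun j => bellBasisAmp 0 0 (a j) (b j)), bellBasisAmp_zero_right,
    mul_comm (Fin.val _), neg_one_pow_mul_val_sum]
  simp only [bellBasisAmp_zero_right (z _), Finset.prod_mul_distrib, ← Finset.prod_pow_eq_pow_sum]
  simp only [neg_one_pow_mul_val_add, Finset.prod_mul_distrib]
  simp only [mul_comm (Fin.val (z _))]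
  ring

lemma bell_expansion_apply (n : ℕ) (β : Fin (n + 1) → Fin 2) (a b : Fin (n + 2) → Fin 2) :
    ((Real.sqrt 2 : ℂ))⁻¹ ^ (n + 1) *
        ∑ z : Fin (n + 1) → Fin 2, (-1 : ℂ) ^ (∑ i, (β i).val * (z i).val) *
          (bellBasisAmp (∑ i, z i) 0 (a 0) (b 0) *
            ∏ i : Fin (n + 1), bellBasisAmp (z i) 0 (a i.succ) (b i.succ))
      = if a = b ∧ ∀ i, a i.succ = β i + a 0 then ((Real.sqrt 2 : ℂ))⁻¹ else 0 := by
  have hc : (fun i => β i + a 0 + a i.succ) = 0 ↔ ∀ i, a i.succ = β i + a 0 := by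
    rw [funext_iff]
    open Fin.CommRing in
    exact forall_congr' fun _ => CharTwo.add_eq_zero.trans eq_comm
  have hs : ((Real.sqrt 2 : ℂ))⁻¹ ^ (n + 1) * (2 ^ (n + 1) * ((Real.sqrt 2 : ℂ))⁻¹ ^ (n + 2))
      = ((Real.sqrt 2 : ℂ))⁻¹ := by
    calc _ = ((Real.sqrt 2 : ℂ))⁻¹ * (((Real.sqrt 2 : ℂ))⁻¹ ^ 2 * 2) ^ (n + 1) := by ring
      _ = _ := by rw [inv_sqrt_two_sq_mul_two, one_pow, mul_one]
  simp only [bell_term_eq_neg_one_pow_mul_prod]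
  rw [← Finset.sum_mul, sum_neg_one_pow_dotProduct (R := ℂ) fun i => β i + a 0 + a i.succ]
  simp only [hc]
  rw [prod_bellBasisAmp_zero_zero, Fintype.card_fin, ite_zero_mul_ite_zero, mul_ite, mul_zero, hs]
  exact if_congr and_comm rfl rfl

/-- **Bell-basis decomposition of `v(β)` (key lemma for Theorem 6).**
`v(β) = 2^{-(n-1)/2} ∑_{z ∈ {0,1}^{n-1}} (-1)^{β·z}
  |Φ^{z',0}⟩_{A_1 B_1} ⊗ ⊗_{i=1}^{n-1} |Φ^{z_i,0}⟩_{A_{i+1} B_{i+1}}`,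
where `z' = z₁ ⊕ ⋯ ⊕ z_{n-1}` and `β·z = ∑ i β_i z_i`. -/
theorem vBeta_bell_decomposition (n : ℕ) (β : Fin (n + 1) → Fin 2) :
    vBeta n β
      = fun p : PairBasis (n + 2) =>
          ((Real.sqrt 2 : ℂ))⁻¹ ^ (n + 1) *
            ∑ z : Fin (n + 1) → Fin 2,
              (-1 : ℂ) ^ (∑ i, (β i).val * (z i).val) *
                (bellBasisAmp (∑ i, z i) 0 (p.1 0) (p.2 0) *
                  ∏ i : Fin (n + 1), bellBasisAmp (z i) 0 (p.1 i.succ) (p.2 i.succ)) := by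
  funext ⟨a, b⟩
  rw [vBeta_apply, bell_expansion_apply]
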